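/- Let D ≥ 1, N ≥ 2, let x_1, …, x_N ∈ ℝ^D be pairwise distinct, let ε > 0, and let ρ = max_{i,j} ‖x_i − x_j‖. Then there exists a coupling π of the mixture measure ν_ε and the empirical measure μ_X = (1/N)·Σ_{i=1}^N δ_{x_i} such that ∫_{ℝ^D × ℝ^D} ‖x − y‖² dπ(x,y) ≤ ε² · D · (ln(1 + ρ))². In particular the squared 2-Wasserstein distance between ν_ε and μ_X is at most ε² · D · (ln(1 + ρ))². -/

import Mathlib

/-!
Each component `g_{x_i,σ_i}` is the product of `D` one-dimensional Gaussians `N(x_i k, σ_i²)`,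
so its mean squared distance to its centre is `D σ_i²`. Sending the `i`-th component to `x_i`,
i.e. taking `π = (1/N) Σ_i g_{x_i,σ_i} ⊗ δ_{x_i}`, couples `ν_ε` with `μ_X` at cost
`(1/N) Σ_i D σ_i²`, and `σ_i ≤ ε ln(1 + ρ)` because every nearest-neighbour distance is at most `ρ`.
-/

open MeasureTheory Real ENNReal

/-- The Gaussian density on `ℝ^D` with center `x` and scale `σ`:
`g_{x,σ}(y) = (2πσ²)^{-D/2} · exp(−‖y−x‖²/(2σ²))`. -/
noncomputable def gaussDensity (D : ℕ) (x : EuclideanSpace ℝ (Fin D)) (σ : ℝ)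
    (y : EuclideanSpace ℝ (Fin D)) : ℝ :=
  (2 * Real.pi * σ ^ 2) ^ (-(D : ℝ) / 2) * Real.exp (-‖y - x‖ ^ 2 / (2 * σ ^ 2))

/-- `min_{j ≠ i} ‖x_i − x_j‖`, the distance from `x_i` to its nearest other point. -/
noncomputable def minDist {D N : ℕ} (hN : 2 ≤ N) (x : Fin N → EuclideanSpace ℝ (Fin D))
    (i : Fin N) : ℝ :=
  (Finset.univ.erase i).inf'
    (by
      rw [← Finset.card_pos, Finset.card_erase_of_mem (Finset.mem_univ i),
        Finset.card_univ, Fintype.card_fin]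
      omega)
    fun j => ‖x i - x j‖

/-- The adaptive bandwidth `σ_i(ε) = ε · ln(1 + min_{j ≠ i} ‖x_i − x_j‖)`. -/
noncomputable def sigmaEps {D N : ℕ} (hN : 2 ≤ N) (x : Fin N → EuclideanSpace ℝ (Fin D))
    (ε : ℝ) (i : Fin N) : ℝ :=
  ε * Real.log (1 + minDist hN x i)

/-- The mixture representation `f_{X,σ(ε)}(y) = (1/N)·Σ_i g_{x_i, σ_i(ε)}(y)`. -/
noncomputable def mixtureDensity {D N : ℕ} (hN : 2 ≤ N) (x : Fin N → EuclideanSpace ℝ (Fin D))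
    (ε : ℝ) (y : EuclideanSpace ℝ (Fin D)) : ℝ :=
  (1 / (N : ℝ)) * ∑ i, gaussDensity D (x i) (sigmaEps hN x ε i) y

/-- The measure `ν_ε` on `ℝ^D` with Lebesgue density `f_{X,σ(ε)}`. -/
noncomputable def mixtureMeasure {D N : ℕ} (hN : 2 ≤ N) (x : Fin N → EuclideanSpace ℝ (Fin D))
    (ε : ℝ) : Measure (EuclideanSpace ℝ (Fin D)) :=
  volume.withDensity fun y => ENNReal.ofReal (mixtureDensity hN x ε y)

/-- The empirical measure `μ_X = (1/N)·Σ_i δ_{x_i}`. -/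
noncomputable def empiricalMeasure {D N : ℕ} (x : Fin N → EuclideanSpace ℝ (Fin D)) :
    Measure (EuclideanSpace ℝ (Fin D)) :=
  ((N : ℝ≥0∞))⁻¹ • ∑ i, Measure.dirac (x i)

/-- The squared 2-Wasserstein distance: the infimum of the quadratic transport cost
over all couplings of `μ` and `ν`. -/
noncomputable def W2sq {D : ℕ} (μ ν : Measure (EuclideanSpace ℝ (Fin D))) : ℝ≥0∞ :=
  ⨅ (pl : Measure (EuclideanSpace ℝ (Fin D) × EuclideanSpace ℝ (Fin D)))
    (_ : IsProbabilityMeasure pl) (_ : pl.map Prod.fst = μ) (_ : pl.map Prod.snd = ν),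
    ∫⁻ p, ENNReal.ofReal (‖p.1 - p.2‖ ^ 2) ∂pl

open ProbabilityTheory
open scoped NNReal

theorem MeasurableEquiv.map_withDensity {α β : Type*} [MeasurableSpace α] [MeasurableSpace β]
    (e : α ≃ᵐ β) (μ : Measure α) (f : α → ℝ≥0∞) :
    (μ.withDensity f).map e = (μ.map e).withDensity (f ∘ e.symm) := by
  ext s hs
  rw [Measure.map_apply e.measurable hs, withDensity_apply _ (e.measurable hs),
    withDensity_apply _ hs, Measure.restrict_map e.measurable hs, lintegral_map_equiv]
  simp

theorem MeasureTheory.Measure.pi_withDensity_ofReal {ι : Type*} [Fintype ι] {α : ι → Type*}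
    [∀ i, MeasurableSpace (α i)] (μ : ∀ i, Measure (α i)) [∀ i, SigmaFinite (μ i)]
    (p : ∀ i, α i → ℝ) (hp : ∀ i, Integrable (p i) (μ i)) (hp_nonneg : ∀ i, 0 ≤ p i) :
    Measure.pi (fun i => (μ i).withDensity fun t => ENNReal.ofReal (p i t)) =
      (Measure.pi μ).withDensity fun z => ENNReal.ofReal (∏ i, p i (z i)) := by
  refine Measure.pi_eq fun s hs => ?_
  have hind : ∀ i, Integrable ((s i).indicator (p i)) (μ i) := fun i => (hp i).indicator (hs i)
  have hind_nonneg : ∀ i, 0 ≤ (s i).indicator (p i) :=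
    fun i => Set.indicator_nonneg fun t _ => hp_nonneg i t
  have hbox : ∀ z : ∀ i, α i,
      (Set.univ.pi s).indicator (fun z => ENNReal.ofReal (∏ i, p i (z i))) z =
        ENNReal.ofReal (∏ i, (s i).indicator (p i) (z i)) := by
    intro z
    by_cases hz : z ∈ Set.univ.pi s
    · rw [Set.indicator_of_mem hz]
      congr 1
      exact Finset.prod_congr rfl fun i _ => (Set.indicator_of_mem (hz i trivial) _).symm
    · obtain ⟨i, hi⟩ : ∃ i, z i ∉ s i := by simpa [Set.mem_univ_pi] using hz
      rw [Set.indicator_of_notMem hz, Finset.prod_eq_zero (Finset.mem_univ i)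
        (Set.indicator_of_notMem hi _), ENNReal.ofReal_zero]
  have hfactor : ∀ i, (μ i).withDensity (fun t => ENNReal.ofReal (p i t)) (s i) =
      ENNReal.ofReal (∫ t, (s i).indicator (p i) t ∂μ i) := by
    intro i
    rw [withDensity_apply _ (hs i), ← lintegral_indicator (hs i),
      ofReal_integral_eq_lintegral_ofReal (hind i) (.of_forall (hind_nonneg i))]
    exact congrArg _ (Set.indicator_comp_of_zero ENNReal.ofReal_zero)
  rw [withDensity_apply _ (MeasurableSet.univ_pi hs),
    ← lintegral_indicator (MeasurableSet.univ_pi hs), lintegral_congr hbox,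
    ← ofReal_integral_eq_lintegral_ofReal (Integrable.fintype_prod_dep hind)
      (.of_forall fun z => Finset.prod_nonneg fun i _ => hind_nonneg i (z i)),
    integral_fintype_prod_eq_prod,
    ENNReal.ofReal_prod_of_nonneg fun i _ => integral_nonneg (hind_nonneg i)]
  simp_rw [hfactor]

theorem lintegral_sq_sub_gaussianReal (m : ℝ) (v : ℝ≥0) :
    ∫⁻ t, ENNReal.ofReal ((t - m) ^ 2) ∂gaussianReal m v = v := by
  rw [← ofReal_coe_nnreal, ← variance_id_gaussianReal (μ := m),
    ofReal_variance IsGaussian.memLp_two_id, evariance_eq_lintegral_ofReal]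
  simp only [id, integral_id_gaussianReal]

noncomputable def gaussMeasure (D : ℕ) (x : EuclideanSpace ℝ (Fin D)) (σ : ℝ) :
    Measure (EuclideanSpace ℝ (Fin D)) :=
  volume.withDensity fun y => ENNReal.ofReal (gaussDensity D x σ y)

section Gaussian

variable {D : ℕ} (x : EuclideanSpace ℝ (Fin D)) {σ : ℝ}

theorem gaussDensity_nonneg (y : EuclideanSpace ℝ (Fin D)) : 0 ≤ gaussDensity D x σ y := by
  unfold gaussDensity
  positivity

theorem continuous_gaussDensity : Continuous (gaussDensity D x σ) := by
  unfold gaussDensity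
  fun_prop

theorem gaussDensity_eq_prod_gaussianPDFReal (y : EuclideanSpace ℝ (Fin D)) :
    gaussDensity D x σ y = ∏ k, gaussianPDFReal (x k) (σ ^ 2).toNNReal (y k) := by
  simp only [gaussDensity, gaussianPDFReal, Finset.prod_mul_distrib, ← Real.exp_sum,
    Finset.prod_const, Finset.card_univ, Fintype.card_fin, EuclideanSpace.norm_sq_eq,
    Real.norm_eq_abs, sq_abs, ← Finset.sum_div, Finset.sum_neg_distrib, PiLp.sub_apply]
  rw [Real.coe_toNNReal _ (sq_nonneg σ)]
  congr 1
  rw [Real.sqrt_eq_rpow, ← Real.rpow_neg (by positivity), ← Real.rpow_mul_natCast (by positivity)]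
  ring_nf

variable {x}

theorem gaussMeasure_eq_map_pi (hσ : σ ≠ 0) :
    gaussMeasure D x σ =
      (Measure.pi fun k => gaussianReal (x k) (σ ^ 2).toNNReal).map (WithLp.toLp 2) := by
  have hv : (σ ^ 2).toNNReal ≠ 0 := by simpa using hσ
  simp_rw [gaussianReal_of_var_ne_zero _ hv, gaussianPDF_def]
  rw [Measure.pi_withDensity_ofReal _ _ (fun k => integrable_gaussianPDFReal _ _)
      (fun k => gaussianPDFReal_nonneg _ _), ← volume_pi, ← MeasurableEquiv.coe_toLp,
    MeasurableEquiv.map_withDensity, MeasurableEquiv.coe_toLp,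
    (PiLp.volume_preserving_toLp _).map_eq]
  simp only [gaussMeasure, gaussDensity_eq_prod_gaussianPDFReal]
  rfl

theorem isProbabilityMeasure_gaussMeasure (hσ : σ ≠ 0) :
    IsProbabilityMeasure (gaussMeasure D x σ) := by
  rw [gaussMeasure_eq_map_pi hσ]
  exact Measure.isProbabilityMeasure_map (by fun_prop)

theorem lintegral_norm_sub_sq_gaussMeasure (hσ : σ ≠ 0) :
    ∫⁻ y, ENNReal.ofReal (‖y - x‖ ^ 2) ∂gaussMeasure D x σ = ENNReal.ofReal (D * σ ^ 2) := by
  have hcoord : ∀ k, ∫⁻ z, ENNReal.ofReal ((z k - x k) ^ 2)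
      ∂Measure.pi (fun k => gaussianReal (x k) (σ ^ 2).toNNReal) = ENNReal.ofReal (σ ^ 2) := by
    intro k
    refine ((measurePreserving_eval (fun k => gaussianReal (x k) (σ ^ 2).toNNReal) k).lintegral_comp
      (f := fun t : ℝ => ENNReal.ofReal ((t - x k) ^ 2)) (by fun_prop)).trans ?_
    rw [lintegral_sq_sub_gaussianReal, ← ofReal_coe_nnreal, Real.coe_toNNReal _ (sq_nonneg σ)]
  rw [gaussMeasure_eq_map_pi hσ, lintegral_map (by fun_prop) (by fun_prop)]
  simp_rw [EuclideanSpace.norm_sq_eq, PiLp.sub_apply, Real.norm_eq_abs, sq_abs]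
  rw [lintegral_congr fun z => ENNReal.ofReal_sum_of_nonneg fun k _ => sq_nonneg _,
    lintegral_finsetSum _ fun k _ => by fun_prop]
  simp only [hcoord, Finset.sum_const, Finset.card_univ, Fintype.card_fin, nsmul_eq_mul]
  rw [ENNReal.ofReal_mul D.cast_nonneg, ENNReal.ofReal_natCast]

end Gaussian

theorem mixtureMeasure_eq_smul_sum {D N : ℕ} (hN : 2 ≤ N) (x : Fin N → EuclideanSpace ℝ (Fin D))
    (ε : ℝ) :
    mixtureMeasure hN x ε = (N : ℝ≥0∞)⁻¹ • ∑ i, gaussMeasure D (x i) (sigmaEps hN x ε i) := by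
  ext s hs
  simp only [mixtureMeasure, gaussMeasure, mixtureDensity, Measure.smul_apply,
    Measure.finsetSum_apply, withDensity_apply _ hs, smul_eq_mul]
  simp_rw [ENNReal.ofReal_mul (by positivity : (0 : ℝ) ≤ 1 / N),
    ENNReal.ofReal_sum_of_nonneg fun i _ => gaussDensity_nonneg _ _]
  have hmeas : ∀ i, Measurable fun y =>
      ENNReal.ofReal (gaussDensity D (x i) (sigmaEps hN x ε i) y) :=
    fun i => (continuous_gaussDensity _).measurable.ennreal_ofReal
  rw [lintegral_const_mul _ (Finset.measurable_sum _ fun i _ => hmeas i),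
    lintegral_finsetSum _ fun i _ => hmeas i, one_div,
    ENNReal.ofReal_inv_of_pos (by positivity), ENNReal.ofReal_natCast]

theorem exists_coupling_lintegral_le {ι α β : Type*} [Fintype ι] [MeasurableSpace α]
    [MeasurableSpace β] {c : ℝ≥0∞} (hc : c * Fintype.card ι = 1)
    (γ : ι → Measure α) [∀ i, IsProbabilityMeasure (γ i)] (a : ι → β)
    {f : α × β → ℝ≥0∞} (hf : Measurable f) {B : ℝ≥0∞} (hB : ∀ i, ∫⁻ y, f (y, a i) ∂γ i ≤ B) :
    ∃ P : Measure (α × β), IsProbabilityMeasure P ∧ P.map Prod.fst = c • ∑ i, γ i ∧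
      P.map Prod.snd = c • ∑ i, Measure.dirac (a i) ∧ ∫⁻ p, f p ∂P ≤ B := by
  refine ⟨c • ∑ i, (γ i).prod (Measure.dirac (a i)), ⟨?_⟩, ?_, ?_, ?_⟩
  · simp [Measure.finsetSum_apply, hc]
  · simp [Measure.map_smul, Measure.map_finset_sum' measurable_fst.aemeasurable]
  · simp [Measure.map_smul, Measure.map_finset_sum' measurable_snd.aemeasurable]
  · simp only [lintegral_smul_measure, lintegral_finsetSum_measure, Measure.prod_dirac,
      lintegral_map hf measurable_prodMk_right]
    calc c * ∑ i, ∫⁻ y, f (y, a i) ∂γ i ≤ c * ∑ _i : ι, B := by gcongr with i; exact hB i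
      _ = B := by rw [Finset.sum_const, nsmul_eq_mul, ← mul_assoc, Finset.card_univ, hc, one_mul]

theorem W2sq_le_lintegral {D : ℕ} {μ ν : Measure (EuclideanSpace ℝ (Fin D))}
    {P : Measure (EuclideanSpace ℝ (Fin D) × EuclideanSpace ℝ (Fin D))}
    [hP : IsProbabilityMeasure P] (hfst : P.map Prod.fst = μ) (hsnd : P.map Prod.snd = ν) :
    W2sq μ ν ≤ ∫⁻ p, ENNReal.ofReal (‖p.1 - p.2‖ ^ 2) ∂P :=
  iInf_le_of_le P <| iInf_le_of_le hP <| iInf_le_of_le hfst <| iInf_le_of_le hsnd le_rfl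

section Bandwidth

variable {D N : ℕ} (hN : 2 ≤ N) {x : Fin N → EuclideanSpace ℝ (Fin D)}

theorem minDist_pos (hx : Function.Injective x) (i : Fin N) : 0 < minDist hN x i := by
  rw [minDist, Finset.lt_inf'_iff]
  intro j hj
  exact norm_sub_pos_iff.mpr (hx.ne (Finset.ne_of_mem_erase hj).symm)

theorem sigmaEps_ne_zero (hx : Function.Injective x) {ε : ℝ} (hε : ε ≠ 0) (i : Fin N) :
    sigmaEps hN x ε i ≠ 0 :=
  mul_ne_zero hε (Real.log_pos (by linarith [minDist_pos hN hx i])).ne'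

theorem sigmaEps_sq_le {ρ : ℝ} (hρ : ∀ i j, ‖x i - x j‖ ≤ ρ) (ε : ℝ) (i : Fin N) :
    sigmaEps hN x ε i ^ 2 ≤ ε ^ 2 * Real.log (1 + ρ) ^ 2 := by
  have : Nontrivial (Fin N) := Fin.nontrivial_iff_two_le.mpr hN
  obtain ⟨j, hji⟩ := exists_ne i
  have hmin_nonneg : 0 ≤ minDist hN x i := Finset.le_inf' _ _ fun j _ => norm_nonneg _
  have hmin_le : minDist hN x i ≤ ρ :=
    (Finset.inf'_le _ (Finset.mem_erase.mpr ⟨hji, Finset.mem_univ j⟩)).trans (hρ i j)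
  have hlog_nonneg : 0 ≤ Real.log (1 + minDist hN x i) := Real.log_nonneg (by linarith)
  rw [sigmaEps, mul_pow]
  gcongr

end Bandwidth

/-- with `ρ = max_{i,j} ‖x_i − x_j‖`, there is a coupling `π` of the
mixture measure `ν_ε` and the empirical measure `μ_X` with quadratic transport cost
at most `ε²·D·(ln(1+ρ))²`; in particular the squared 2-Wasserstein distance between
`ν_ε` and `μ_X` is at most `ε²·D·(ln(1+ρ))²`. -/
theorem coupling_cost_le_log_bound {D N : ℕ} (hN : 2 ≤ N)
    (x : Fin N → EuclideanSpace ℝ (Fin D)) (hx : Function.Injective x)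
    (ε : ℝ) (hε : 0 < ε) (ρ : ℝ)
    (hρ : ρ = Finset.univ.sup'
      (Finset.univ_nonempty_iff.mpr ⟨(⟨0, by omega⟩, ⟨0, by omega⟩)⟩)
      (fun p : Fin N × Fin N => ‖x p.1 - x p.2‖)) :
    (∃ pl : Measure (EuclideanSpace ℝ (Fin D) × EuclideanSpace ℝ (Fin D)),
        IsProbabilityMeasure pl ∧
        pl.map Prod.fst = mixtureMeasure hN x ε ∧
        pl.map Prod.snd = empiricalMeasure x ∧
        ∫⁻ p, ENNReal.ofReal (‖p.1 - p.2‖ ^ 2) ∂pl ≤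
          ENNReal.ofReal (ε ^ 2 * (D : ℝ) * Real.log (1 + ρ) ^ 2)) ∧
      W2sq (mixtureMeasure hN x ε) (empiricalMeasure x) ≤
        ENNReal.ofReal (ε ^ 2 * (D : ℝ) * Real.log (1 + ρ) ^ 2) := by
  have hdist : ∀ i j, ‖x i - x j‖ ≤ ρ := fun i j =>
    hρ ▸ Finset.le_sup' (fun p : Fin N × Fin N => ‖x p.1 - x p.2‖) (Finset.mem_univ (i, j))
  have hσ := sigmaEps_ne_zero hN hx hε.ne'
  have := fun i => isProbabilityMeasure_gaussMeasure (x := x i) (hσ i)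
  have hc : (N : ℝ≥0∞)⁻¹ * Fintype.card (Fin N) = 1 := by
    rw [Fintype.card_fin, ENNReal.inv_mul_cancel (Nat.cast_ne_zero.mpr (by omega)) (ENNReal.natCast_ne_top N)]
  obtain ⟨P, hP, hfst, hsnd, hcost⟩ := exists_coupling_lintegral_le hc
    (fun i => gaussMeasure D (x i) (sigmaEps hN x ε i)) x
    (f := fun p => ENNReal.ofReal (‖p.1 - p.2‖ ^ 2)) (by fun_prop)
    (B := ENNReal.ofReal (ε ^ 2 * D * Real.log (1 + ρ) ^ 2)) fun i => by
      rw [lintegral_norm_sub_sq_gaussMeasure (hσ i), mul_comm (ε ^ 2), mul_assoc]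
      exact ENNReal.ofReal_le_ofReal
        (mul_le_mul_of_nonneg_left (sigmaEps_sq_le hN hdist ε i) D.cast_nonneg)
  rw [← mixtureMeasure_eq_smul_sum] at hfst
  exact ⟨⟨P, hP, hfst, hsnd, hcost⟩, (W2sq_le_lintegral hfst hsnd).trans hcost⟩
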